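/- arXiv:1303.3250 — 8 statements merged into one kernel-verified Lean document; each statement's English description precedes it below -/
import Mathlib

section
/- Let L be an n×n real matrix whose off-diagonal entries are all nonpositive and whose row sums are all zero (i.e., L *ᵥ 1 = 0, so L is the Laplacian matrix of a weighted directed graph). Then for every nonzero real number ω, the complex matrix iω·I + L (with L cast to ℂ entrywise) is invertible. -/
open Matrix Finset

/-!
Zero row sums and nonpositive off-diagonal entries make `L` weakly diagonally dominant with
nonnegative diagonal: `L i i = ∑_{j ≠ i} |L i j|`. Adding `iω` to the diagonal moves each diagonal
entry off the real axis, so `|L i i + iω| > L i i` and the matrix becomes strictly diagonally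
dominant; Gershgorin's theorem then rules out the eigenvalue `0`.
-/

variable {ι : Type*} [Fintype ι] [DecidableEq ι]

theorem diag_eq_sum_abs_offDiag_of_mulVec_one_eq_zero {R : Type*} [Ring R] [LinearOrder R]
    [IsOrderedRing R] {L : Matrix ι ι R} (hoff : ∀ i j, i ≠ j → L i j ≤ 0)
    (hrow : L *ᵥ (fun _ => 1) = 0) (i : ι) :
    L i i = ∑ j ∈ univ.erase i, |L i j| := by
  have hsum : ∑ j, L i j = 0 := by simpa [mulVec, dotProduct] using congrFun hrow i
  rw [← add_sum_erase _ _ (mem_univ i)] at hsum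
  rw [sum_congr rfl fun j hj => abs_of_nonpos (hoff i j (ne_of_mem_erase hj).symm),
    sum_neg_distrib]
  exact eq_neg_of_add_eq_zero_left hsum

theorem det_I_mul_smul_one_add_map_ofReal_ne_zero {A : Matrix ι ι ℝ}
    (hdom : ∀ i, ∑ j ∈ univ.erase i, |A i j| ≤ A i i) {ω : ℝ} (hω : ω ≠ 0) :
    ((Complex.I * ω) • (1 : Matrix ι ι ℂ) + A.map Complex.ofReal).det ≠ 0 := by
  refine det_ne_zero_of_sum_row_lt_diag fun i => ?_
  set M := (Complex.I * ω) • (1 : Matrix ι ι ℂ) + A.map Complex.ofReal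
  have hdiag : M i i = ⟨A i i, ω⟩ := by apply Complex.ext <;> simp [M]
  have hoffDiag : ∀ j ∈ univ.erase i, ‖M i j‖ = |A i j| := fun j hj => by
    simp [M, one_apply_ne (ne_of_mem_erase hj).symm]
  calc ∑ j ∈ univ.erase i, ‖M i j‖ = ∑ j ∈ univ.erase i, |A i j| := sum_congr rfl hoffDiag
    _ ≤ A i i := hdom i
    _ ≤ |A i i| := le_abs_self _
    _ < ‖M i i‖ := by rw [hdiag]; exact (Complex.abs_re_lt_norm (z := ⟨A i i, ω⟩)).2 hω

theorem directed_laplacian_shifted_invertible (n : ℕ) (L : Matrix (Fin n) (Fin n) ℝ)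
    (hoff : ∀ i j, i ≠ j → L i j ≤ 0)
    (hrow : L *ᵥ (fun _ => (1 : ℝ)) = 0) :
    ∀ ω : ℝ, ω ≠ 0 →
      IsUnit ((Complex.I * ω) • (1 : Matrix (Fin n) (Fin n) ℂ) + L.map Complex.ofReal) := by
  intro ω hω
  rw [isUnit_iff_isUnit_det, isUnit_iff_ne_zero]
  exact det_I_mul_smul_one_add_map_ofReal_ne_zero
    (fun i => (diag_eq_sum_abs_offDiag_of_mulVec_one_eq_zero hoff hrow i).ge) hω
end

section
/- Let L be an n×n real symmetric matrix and ω a nonzero real number, with L cast to a complex matrix entrywise. Then both iω·I + L and −iω·I + L are invertible over ℂ, and (iω·I + L)⁻¹ · (−iω·I + L)⁻¹ = (ω²·I + L·L)⁻¹. -/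
open Matrix

lemma herm_shift_isUnit {n : ℕ} (M : Matrix (Fin n) (Fin n) ℂ) (hM : Mᴴ = M)
    (c : ℂ) (hc : c.im ≠ 0) : IsUnit (c • (1 : Matrix (Fin n) (Fin n) ℂ) + M) := by
  rw [Matrix.isUnit_iff_isUnit_det, isUnit_iff_ne_zero]
  intro hdet
  obtain ⟨v, hv, hmv⟩ := Matrix.exists_mulVec_eq_zero_iff.mpr hdet
  have hMv : M *ᵥ v = -(c • v) := by
    have := hmv
    rw [Matrix.add_mulVec, Matrix.smul_mulVec, Matrix.one_mulVec] at this
    linear_combination (norm := module) this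
  set s : ℂ := star v ⬝ᵥ (M *ᵥ v) with hs
  have hss : star s = s := by
    calc star s = star (star v ⬝ᵥ (M *ᵥ v)) := by rw [hs]
    _ = star (star (star (M *ᵥ v) ⬝ᵥ v)) := congrArg star (Matrix.star_dotProduct _ _)
    _ = star (M *ᵥ v) ⬝ᵥ v := star_star _
    _ = (star v ᵥ* Mᴴ) ⬝ᵥ v := by rw [Matrix.star_mulVec]
    _ = star v ⬝ᵥ (M *ᵥ v) := by rw [hM, ← Matrix.dotProduct_mulVec]
    _ = s := hs.symm
  set t : ℂ := star v ⬝ᵥ v with ht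
  have htr : (t : ℂ) = ((∑ i, Complex.normSq (v i) : ℝ) : ℂ) := by
    simp [ht, dotProduct, Complex.normSq_eq_conj_mul_self, Pi.star_apply]
  have htne : t ≠ 0 := by
    rw [htr]
    intro h
    have h' : (∑ i, Complex.normSq (v i)) = 0 := by exact_mod_cast h
    have hz : ∀ i ∈ Finset.univ, Complex.normSq (v i) = 0 :=
      (Finset.sum_eq_zero_iff_of_nonneg (fun i _ => Complex.normSq_nonneg (v i))).mp h'
    exact hv (funext fun i => Complex.normSq_eq_zero.mp (hz i (Finset.mem_univ i)))
  have hst : star t = t := by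
    rw [htr]; simp
  have hsv : s = -c * t := by
    rw [hs, hMv, ht]
    simp [dotProduct_smul, dotProduct_neg, smul_eq_mul, neg_mul]
  have hkey : star (-c) * t = -c * t := by
    calc star (-c) * t = star (-c) * star t := by rw [hst]
    _ = star (-c * t) := (star_mul' _ _).symm
    _ = star s := by rw [hsv]
    _ = s := hss
    _ = -c * t := hsv
  have hcc : star (-c) = -c := mul_right_cancel₀ htne hkey
  apply hc
  have h2 : (-c).im = 0 := Complex.conj_eq_iff_im.mp hcc
  simpa using h2

theorem undirected_cross_spectrum (n : ℕ) (L : Matrix (Fin n) (Fin n) ℝ)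
    (hsym : L.IsSymm) (ω : ℝ) (hω : ω ≠ 0) :
    IsUnit ((Complex.I * ω) • (1 : Matrix (Fin n) (Fin n) ℂ) + L.map Complex.ofReal) ∧
    IsUnit ((-(Complex.I * ω)) • (1 : Matrix (Fin n) (Fin n) ℂ) + L.map Complex.ofReal) ∧
    ((Complex.I * ω) • (1 : Matrix (Fin n) (Fin n) ℂ) + L.map Complex.ofReal)⁻¹ *
        ((-(Complex.I * ω)) • (1 : Matrix (Fin n) (Fin n) ℂ) + L.map Complex.ofReal)⁻¹ =
      (((ω : ℂ) ^ 2) • (1 : Matrix (Fin n) (Fin n) ℂ) +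
        L.map Complex.ofReal * L.map Complex.ofReal)⁻¹ := by
  set M : Matrix (Fin n) (Fin n) ℂ := L.map Complex.ofReal with hMdef
  have hM : Mᴴ = M := by
    ext i j
    simp [hMdef, Matrix.conjTranspose_apply, Matrix.map_apply, hsym.apply]
  have h1 : IsUnit ((Complex.I * ω) • (1 : Matrix (Fin n) (Fin n) ℂ) + M) := by
    apply herm_shift_isUnit M hM
    simp [hω]
  have h2 : IsUnit ((-(Complex.I * ω)) • (1 : Matrix (Fin n) (Fin n) ℂ) + M) := by
    apply herm_shift_isUnit M hM
    simp [hω]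
  refine ⟨h1, h2, ?_⟩
  have hprod : ((-(Complex.I * ω)) • (1 : Matrix (Fin n) (Fin n) ℂ) + M) *
      ((Complex.I * ω) • (1 : Matrix (Fin n) (Fin n) ℂ) + M) =
      ((ω : ℂ) ^ 2) • (1 : Matrix (Fin n) (Fin n) ℂ) + M * M := by
    have hc2 : (-(Complex.I * ω)) * (Complex.I * ω) = (ω : ℂ) ^ 2 := by
      have h : -(Complex.I * (ω : ℂ)) * (Complex.I * ω) =
          -(Complex.I * Complex.I) * ((ω : ℂ) * ω) := by ring
      rw [h, Complex.I_mul_I]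
      ring
    simp only [Matrix.add_mul, Matrix.mul_add, Matrix.smul_mul, Matrix.mul_smul,
      Matrix.one_mul, Matrix.mul_one, smul_add, smul_smul]
    rw [show (Complex.I * (ω:ℂ)) * (-(Complex.I * ω)) = -(Complex.I * (ω:ℂ)) * (Complex.I * ω) from by ring, hc2]
    module
  rw [← hprod, Matrix.mul_inv_rev]
end

section
/- Let L be an n×n (n ≥ 1) real symmetric positive semidefinite matrix with L *ᵥ 1 = 0, let ω be a nonzero real number and c > 0 a real constant, and define S := c · (ω²·I + L·L)⁻¹. Then S is invertible; for every index i, the i-th entry of S⁻¹ *ᵥ 1 equals ω²/c; the square of L is recovered as L·L = c·S⁻¹ − ω²·I; and L is the unique real symmetric positive semidefinite matrix K satisfying K·K = c·S⁻¹ − ω²·I. -/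
/-!
Since `L * L` is positive semidefinite and `ω ≠ 0`, the matrix `ω² I + L²` is positive definite,
so `S⁻¹ = c⁻¹ (ω² I + L²)`. Zero row sums of `L` make `𝟙` an eigenvector of `S⁻¹` with
eigenvalue `ω² / c`, and `L` is recovered from `L² = c S⁻¹ - ω² I` by uniqueness of
positive semidefinite square roots.
-/

open Matrix

namespace Matrix

variable {ι : Type*} [Fintype ι] [DecidableEq ι]

lemma isUnit_smul_nonsing_inv {K : Type*} [Field K] {M : Matrix ι ι K} (hM : IsUnit M)
    {c : K} (hc : c ≠ 0) : IsUnit (c • M⁻¹) :=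
  (isUnit_smul_iff (Units.mk0 c hc) M⁻¹).mpr (isUnit_nonsing_inv_iff.mpr hM)

lemma inv_smul_nonsing_inv {K : Type*} [Field K] {M : Matrix ι ι K} (hM : IsUnit M)
    {c : K} (hc : c ≠ 0) : (c • M⁻¹)⁻¹ = c⁻¹ • M := by
  refine inv_eq_right_inv ?_
  rw [Matrix.smul_mul, Matrix.mul_smul, nonsing_inv_mul _ ((isUnit_iff_isUnit_det M).mp hM),
    smul_smul, mul_inv_cancel₀ hc, one_smul]

lemma posDef_smul_one_add_mul_self {L : Matrix ι ι ℝ} (hL : L.IsHermitian) {a : ℝ}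
    (ha : 0 < a) : (a • (1 : Matrix ι ι ℝ) + L * L).PosDef := by
  have hLL : (L * L).PosSemidef := by
    simpa only [hL.eq] using posSemidef_conjTranspose_mul_self L
  exact (PosDef.one.smul ha).add_posSemidef hLL

lemma smul_one_add_mul_self_mulVec {R : Type*} [CommRing R] {L : Matrix ι ι R} {v : ι → R}
    (hv : L *ᵥ v = 0) (a : R) : (a • (1 : Matrix ι ι R) + L * L) *ᵥ v = a • v := by
  rw [add_mulVec, smul_mulVec, one_mulVec, ← mulVec_mulVec, hv, mulVec_zero, add_zero]

open scoped ComplexOrder MatrixOrder in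
lemma PosSemidef.eq_of_mul_self_eq {𝕜 : Type*} [RCLike 𝕜] {K L : Matrix ι ι 𝕜}
    (hK : K.PosSemidef) (hL : L.PosSemidef) (h : K * K = L * L) : K = L :=
  (CFC.sq_eq_sq_iff K L hK.nonneg hL.nonneg).mp (by rw [sq, sq, h])

end Matrix

theorem undirected_laplacian_reconstruction_general (n : ℕ)
    (L : Matrix (Fin n) (Fin n) ℝ) (hL : L.PosSemidef)
    (hrow : L *ᵥ (fun _ => (1 : ℝ)) = 0)
    (ω : ℝ) (hω : ω ≠ 0) (c : ℝ) (hc : 0 < c)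
    (S : Matrix (Fin n) (Fin n) ℝ)
    (hS : S = c • ((ω ^ 2) • (1 : Matrix (Fin n) (Fin n) ℝ) + L * L)⁻¹) :
    IsUnit S ∧
    (∀ i : Fin n, (S⁻¹ *ᵥ (fun _ => (1 : ℝ))) i = ω ^ 2 / c) ∧
    L * L = c • S⁻¹ - (ω ^ 2) • (1 : Matrix (Fin n) (Fin n) ℝ) ∧
    (∀ K : Matrix (Fin n) (Fin n) ℝ, K.PosSemidef →
      K * K = c • S⁻¹ - (ω ^ 2) • (1 : Matrix (Fin n) (Fin n) ℝ) → K = L) := by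
  have hM := (posDef_smul_one_add_mul_self hL.isHermitian (sq_pos_of_ne_zero hω)).isUnit
  have hSinv : S⁻¹ = c⁻¹ • (ω ^ 2 • (1 : Matrix (Fin n) (Fin n) ℝ) + L * L) := by
    rw [hS, inv_smul_nonsing_inv hM hc.ne']
  have hLL : L * L = c • S⁻¹ - ω ^ 2 • (1 : Matrix (Fin n) (Fin n) ℝ) := by
    rw [hSinv, smul_inv_smul₀ hc.ne', add_sub_cancel_left]
  refine ⟨hS ▸ isUnit_smul_nonsing_inv hM hc.ne', fun i => ?_, hLL,
    fun K hK hKK => hK.eq_of_mul_self_eq hL (hKK.trans hLL.symm)⟩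
  rw [hSinv, smul_mulVec, smul_one_add_mul_self_mulVec hrow]
  simp [div_eq_inv_mul]

theorem undirected_laplacian_reconstruction (n : ℕ) (hn : 1 ≤ n)
    (L : Matrix (Fin n) (Fin n) ℝ) (hL : L.PosSemidef)
    (hrow : L *ᵥ (fun _ => (1 : ℝ)) = 0)
    (ω : ℝ) (hω : ω ≠ 0) (c : ℝ) (hc : 0 < c)
    (S : Matrix (Fin n) (Fin n) ℝ)
    (hS : S = c • ((ω ^ 2) • (1 : Matrix (Fin n) (Fin n) ℝ) + L * L)⁻¹) :
    IsUnit S ∧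
    (∀ i : Fin n, (S⁻¹ *ᵥ (fun _ => (1 : ℝ))) i = ω ^ 2 / c) ∧
    L * L = c • S⁻¹ - (ω ^ 2) • (1 : Matrix (Fin n) (Fin n) ℝ) ∧
    (∀ K : Matrix (Fin n) (Fin n) ℝ, K.PosSemidef →
      K * K = c • S⁻¹ - (ω ^ 2) • (1 : Matrix (Fin n) (Fin n) ℝ) → K = L) :=
  undirected_laplacian_reconstruction_general n L hL hrow ω hω c hc S hS
end

section
/- Let L be an n×n real matrix with L *ᵥ 1 = 0, let ω be a nonzero real number such that iω·I + L (with L cast to ℂ entrywise) is invertible, let c > 0 be real, and define S := c · M(ω,L)⁻¹ where M(ω,L) := ω²·I − iω·(L − Lᵀ) + Lᵀ·L. Then for every index i, Lᵀ·L = ω²·( (1/[Re(S⁻¹) *ᵥ 1]_i)·Re(S⁻¹) − I ) and L − Lᵀ = −ω·( (1/[Re(S⁻¹) *ᵥ 1]_i)·Im(S⁻¹) ). -/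
open Matrix

theorem directed_laplacian_gram_and_skew_recovery (n : ℕ) (L : Matrix (Fin n) (Fin n) ℝ)
    (hrow : L *ᵥ (fun _ => (1 : ℝ)) = 0) (ω : ℝ) (hω : ω ≠ 0)
    (hinv : IsUnit ((Complex.I * ω) • (1 : Matrix (Fin n) (Fin n) ℂ) + L.map Complex.ofReal))
    (c : ℝ) (hc : 0 < c)
    (S : Matrix (Fin n) (Fin n) ℂ)
    (hS : S = (c : ℂ) • (((ω : ℂ) ^ 2) • (1 : Matrix (Fin n) (Fin n) ℂ) -
        (Complex.I * ω) • (L.map Complex.ofReal - (L.map Complex.ofReal)ᵀ) +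
        (L.map Complex.ofReal)ᵀ * L.map Complex.ofReal)⁻¹) :
    ∀ i : Fin n,
      Lᵀ * L = (ω ^ 2) • ((1 / (((S⁻¹.map Complex.re) *ᵥ (fun _ => (1 : ℝ))) i)) •
          (S⁻¹.map Complex.re) - (1 : Matrix (Fin n) (Fin n) ℝ)) ∧
      L - Lᵀ = (-ω) • ((1 / (((S⁻¹.map Complex.re) *ᵥ (fun _ => (1 : ℝ))) i)) •
          (S⁻¹.map Complex.im)) := by
  set A : Matrix (Fin n) (Fin n) ℂ :=
    (Complex.I * ω) • (1 : Matrix (Fin n) (Fin n) ℂ) + L.map Complex.ofReal with hA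
  set M : Matrix (Fin n) (Fin n) ℂ :=
    ((ω : ℂ) ^ 2) • (1 : Matrix (Fin n) (Fin n) ℂ) -
      (Complex.I * ω) • (L.map Complex.ofReal - (L.map Complex.ofReal)ᵀ) +
      (L.map Complex.ofReal)ᵀ * L.map Complex.ofReal with hM
  -- factorization
  have hAH : Aᴴ = (L.map Complex.ofReal)ᵀ - (Complex.I * ω) • (1 : Matrix (Fin n) (Fin n) ℂ) := by
    ext i j
    simp [hA, conjTranspose_apply, one_apply, apply_ite, Complex.ext_iff]
    split_ifs with h
    · exact fun h' => absurd h.symm h'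
    · exact fun h' => absurd h'.symm h
  have hfact : M = Aᴴ * A := by
    rw [hAH, hA]
    rw [Matrix.sub_mul, Matrix.mul_add, Matrix.mul_add, Matrix.smul_mul, Matrix.smul_mul,
      Matrix.mul_smul, Matrix.one_mul, Matrix.mul_one, smul_smul]
    have : (Complex.I * ω) * (Complex.I * ω) = -(ω:ℂ)^2 := by
      rw [mul_mul_mul_comm, Complex.I_mul_I]; ring
    rw [this, hM, smul_sub]
    simp only [Matrix.one_mul, neg_smul, smul_neg, sub_eq_add_neg, neg_neg]
    abel
  have hMunit : IsUnit M := by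
    rw [hfact]
    refine (IsUnit.mul ?_ hinv)
    rw [Matrix.isUnit_iff_isUnit_det, Matrix.det_conjTranspose]
    exact (Matrix.isUnit_iff_isUnit_det A).mp hinv |>.star
  -- invert S
  have hcC : (c : ℂ) ≠ 0 := by exact_mod_cast hc.ne'
  have hSinv : S⁻¹ = (c : ℂ)⁻¹ • M := by
    apply Matrix.inv_eq_right_inv
    rw [hS, Matrix.smul_mul, Matrix.mul_smul, smul_smul, mul_inv_cancel₀ hcC,
      Matrix.nonsing_inv_mul M ((Matrix.isUnit_iff_isUnit_det M).mp hMunit), one_smul]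
  -- real and imaginary parts
  have hRe : S⁻¹.map Complex.re = c⁻¹ • ((ω ^ 2) • (1 : Matrix (Fin n) (Fin n) ℝ) + Lᵀ * L) := by
    rw [hSinv, hM]
    ext i j
    have : ((L.map Complex.ofReal)ᵀ * L.map Complex.ofReal) i j = ((Lᵀ * L : Matrix (Fin n) (Fin n) ℝ) i j : ℂ) := by
      simp [Matrix.mul_apply, Matrix.transpose_apply]
    simp [Matrix.map_apply, Matrix.smul_apply, Matrix.add_apply, Matrix.sub_apply,
      Matrix.one_apply, this, Complex.ofReal_inv]
    split_ifs <;> simp [← Complex.ofReal_pow] <;> ring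
  have hIm : S⁻¹.map Complex.im = (-(ω / c)) • (L - Lᵀ) := by
    rw [hSinv, hM]
    ext i j
    have : ((L.map Complex.ofReal)ᵀ * L.map Complex.ofReal) i j = ((Lᵀ * L : Matrix (Fin n) (Fin n) ℝ) i j : ℂ) := by
      simp [Matrix.mul_apply, Matrix.transpose_apply]
    simp [Matrix.map_apply, Matrix.smul_apply, Matrix.add_apply, Matrix.sub_apply,
      Matrix.one_apply, this, Complex.ofReal_inv]
    split_ifs <;> simp [← Complex.ofReal_pow] <;> ring
  -- row sums
  have hvec : ∀ i, ((S⁻¹.map Complex.re) *ᵥ (fun _ => (1 : ℝ))) i = ω ^ 2 / c := by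
    intro i
    rw [hRe]
    have h2 : (Lᵀ * L) *ᵥ (fun _ => (1 : ℝ)) = 0 := by
      rw [← Matrix.mulVec_mulVec, hrow, Matrix.mulVec_zero]
    have : ((ω ^ 2) • (1 : Matrix (Fin n) (Fin n) ℝ) + Lᵀ * L) *ᵥ (fun _ => (1 : ℝ)) =
        fun _ => ω ^ 2 := by
      rw [Matrix.add_mulVec, h2, Matrix.smul_mulVec, Matrix.one_mulVec]
      funext j; simp
    rw [Matrix.smul_mulVec, this]
    simp [div_eq_inv_mul]
  intro i
  have hω2c : ω ^ 2 / c ≠ 0 := div_ne_zero (pow_ne_zero 2 hω) hc.ne'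
  constructor
  · rw [hvec i, hRe]
    ext a b
    simp [Matrix.smul_apply, Matrix.sub_apply, Matrix.add_apply, Matrix.one_apply]
    split_ifs with h <;> field_simp <;> ring
  · rw [hvec i, hIm]
    ext a b
    simp [Matrix.smul_apply, Matrix.sub_apply]
    field_simp
end

section
/- Let A be an n×n (n ≥ 1) real matrix with nonnegative entries, zero diagonal, and A i j · A j i = 0 for all i, j. Let D be the diagonal matrix whose i-th diagonal entry is the i-th row sum of A, and set L := D − A. Let ω be a nonzero real number such that iω·I + L (cast to ℂ entrywise) is invertible, let c > 0, and define S := c · M(ω,L)⁻¹ where M(ω,L) := ω²·I − iω·(L − Lᵀ) + Lᵀ·L. Then for all indices i, j: A i j = max( ω·n·[Im(S⁻¹)] i j / (1ᵀ · Re(S⁻¹) · 1) , 0 ). -/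
open Matrix

theorem unidirectional_network_reconstruction (n : ℕ) (hn : 1 ≤ n)
    (A : Matrix (Fin n) (Fin n) ℝ)
    (hA : ∀ i j, 0 ≤ A i j) (hdiag : ∀ i, A i i = 0)
    (hrecip : ∀ i j, A i j * A j i = 0)
    (D : Matrix (Fin n) (Fin n) ℝ) (hD : D = Matrix.diagonal (fun i => ∑ j, A i j))
    (L : Matrix (Fin n) (Fin n) ℝ) (hL : L = D - A)
    (ω : ℝ) (hω : ω ≠ 0)
    (hinv : IsUnit ((Complex.I * ω) • (1 : Matrix (Fin n) (Fin n) ℂ) + L.map Complex.ofReal))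
    (c : ℝ) (hc : 0 < c)
    (S : Matrix (Fin n) (Fin n) ℂ)
    (hS : S = (c : ℂ) • (((ω : ℂ) ^ 2) • (1 : Matrix (Fin n) (Fin n) ℂ) -
        (Complex.I * ω) • (L.map Complex.ofReal - (L.map Complex.ofReal)ᵀ) +
        (L.map Complex.ofReal)ᵀ * L.map Complex.ofReal)⁻¹) :
    ∀ i j, A i j = max (ω * n * (S⁻¹ i j).im / (∑ p, ∑ q, (S⁻¹ p q).re)) 0 := by
  set Lc : Matrix (Fin n) (Fin n) ℂ := L.map Complex.ofReal with hLc
  set z : ℂ := Complex.I * ω with hz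
  set M : Matrix (Fin n) (Fin n) ℂ :=
    ((ω : ℂ) ^ 2) • (1 : Matrix (Fin n) (Fin n) ℂ) - z • (Lc - Lcᵀ) + Lcᵀ * Lc with hM
  have hz2 : (-z) * z = (ω : ℂ) ^ 2 := by
    have h1 : (-z) * z = -(Complex.I * Complex.I) * ((ω : ℂ) * (ω : ℂ)) := by
      rw [hz]; ring
    rw [h1, Complex.I_mul_I]; ring
  have hLcH : Lcᴴ = Lcᵀ := by
    ext p q
    simp [conjTranspose_apply, hLc, Matrix.map_apply, Complex.conj_ofReal]
  have hfact : M = (z • (1 : Matrix (Fin n) (Fin n) ℂ) + Lc)ᴴ *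
      (z • (1 : Matrix (Fin n) (Fin n) ℂ) + Lc) := by
    have hstarz : star z = -z := by
      simp [hz, mul_comm]
    rw [conjTranspose_add, conjTranspose_smul, conjTranspose_one, hLcH, hstarz]
    simp only [add_mul, mul_add, Matrix.smul_mul, Matrix.mul_smul, one_mul, Matrix.mul_one,
      smul_smul]
    rw [mul_comm z (-z), hz2, hM, smul_sub, neg_smul]
    abel
  have hMunit : IsUnit M := by
    rw [hfact]
    exact ((Matrix.isUnit_conjTranspose _).2 hinv).mul hinv
  have hMdet : IsUnit M.det := (Matrix.isUnit_iff_isUnit_det M).1 hMunit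
  have hcC : (c : ℂ) ≠ 0 := by exact_mod_cast hc.ne'
  have hSinv : S⁻¹ = (c : ℂ)⁻¹ • M := by
    apply Matrix.inv_eq_right_inv
    rw [hS, Matrix.smul_mul, Matrix.mul_smul, smul_smul, mul_inv_cancel₀ hcC,
      Matrix.nonsing_inv_mul M hMdet, one_smul]
  have hentry : ∀ p q, S⁻¹ p q =
      (c : ℂ)⁻¹ * ((if p = q then (ω : ℂ) ^ 2 else 0)
        - z * ((L p q : ℂ) - (L q p : ℂ)) + ∑ k, (L k p : ℂ) * (L k q : ℂ)) := by
    intro p q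
    rw [hSinv]
    simp [hM, Matrix.add_apply, Matrix.sub_apply, Matrix.smul_apply, Matrix.mul_apply,
      Matrix.one_apply, Matrix.transpose_apply, hLc, Matrix.map_apply, smul_eq_mul,
      mul_ite, mul_one, mul_zero]
  have hsplit : ∀ p q, S⁻¹ p q =
      Complex.ofReal (c⁻¹ * ((if p = q then ω ^ 2 else 0) + ∑ k, L k p * L k q))
        + Complex.I * Complex.ofReal (c⁻¹ * (-(ω * (L p q - L q p)))) := by
    intro p q
    rw [hentry p q, hz]
    split <;> push_cast <;> ring
  have him : ∀ p q, (S⁻¹ p q).im = -(c⁻¹ * (ω * (L p q - L q p))) := by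
    intro p q
    rw [hsplit p q]
    simp [Complex.add_im, Complex.mul_im, Complex.ofReal_re, Complex.ofReal_im,
      Complex.I_re, Complex.I_im]
  have hre : ∀ p q, (S⁻¹ p q).re =
      c⁻¹ * ((if p = q then ω ^ 2 else 0) + ∑ k, L k p * L k q) := by
    intro p q
    rw [hsplit p q]
    simp [Complex.add_re, Complex.mul_re, Complex.ofReal_re, Complex.ofReal_im,
      Complex.I_re, Complex.I_im]
  have hLrow : ∀ k, ∑ p, L k p = 0 := by
    intro k
    rw [hL, hD]
    simp [Matrix.sub_apply, Finset.sum_sub_distrib, Matrix.diagonal_apply]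
  have hsum : (∑ p, ∑ q, (S⁻¹ p q).re) = c⁻¹ * (ω ^ 2 * n) := by
    have h1 : (∑ p : Fin n, ∑ q : Fin n, (if p = q then ω ^ 2 else 0 : ℝ)) = ω ^ 2 * n := by
      simp [Finset.sum_ite_eq, Finset.card_univ, mul_comm]
    have h2 : (∑ p : Fin n, ∑ q : Fin n, ∑ k : Fin n, L k p * L k q) = 0 := by
      rw [Finset.sum_comm]
      have hq : ∀ q : Fin n, (∑ p : Fin n, ∑ k : Fin n, L k p * L k q) = 0 := by
        intro q
        rw [Finset.sum_comm]
        apply Finset.sum_eq_zero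
        intro k _
        rw [← Finset.sum_mul, hLrow k, zero_mul]
      simp [hq]
    simp only [hre, mul_add, Finset.sum_add_distrib, ← Finset.mul_sum]
    rw [h1, h2, mul_zero, add_zero]
  intro i j
  have hnR : (n : ℝ) ≠ 0 := by
    have h0 : 0 < n := hn
    positivity
  have hcne : c⁻¹ ≠ 0 := inv_ne_zero hc.ne'
  have hval : ω * n * (S⁻¹ i j).im / (∑ p, ∑ q, (S⁻¹ p q).re) = L j i - L i j := by
    rw [him i j, hsum]
    field_simp
    ring
  rw [hval]
  by_cases hij : i = j
  · subst hij
    simp [hdiag i]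
  · have hLij : L i j = -A i j := by
      rw [hL, hD]
      simp [Matrix.sub_apply, Matrix.diagonal_apply_ne _ hij]
    have hLji : L j i = -A j i := by
      rw [hL, hD]
      simp [Matrix.sub_apply, Matrix.diagonal_apply_ne _ (Ne.symm hij)]
    rw [hLij, hLji]
    have hAij := hA i j
    have hAji := hA j i
    rcases mul_eq_zero.1 (hrecip i j) with h | h
    · rw [h]
      rw [max_eq_right (by linarith : -A j i - -(0:ℝ) ≤ 0)]
    · rw [h]
      rw [max_eq_left (by linarith : (0:ℝ) ≤ -0 - -A i j)]
      ring
end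

section
/- Let L be an (n+1)×(n+1) real matrix with L *ᵥ 1 = 0, let j : Fin (n+1), and let L̃ := L.submatrix (Fin.succAbove j) (Fin.succAbove j). Let ω be a nonzero real number such that both iω·I + L and iω·I + L̃ (cast to ℂ entrywise) are invertible, let c > 0, and define S := c · M(ω,L)⁻¹ and S̃ := c · M(ω,L̃)⁻¹, where M(ω,X) := ω²·I − iω·(X − Xᵀ) + Xᵀ·X. Then the entrywise real part of S̃⁻¹ equals (1/c)·(ω²·I + L̃ᵀ·L̃), and consequently, for every index i of Fin (n+1), L̃ᵀ·L̃ = ω²·( (1/[Re(S⁻¹) *ᵥ 1]_i)·Re(S̃⁻¹) − I ). -/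
open Matrix

lemma aux_re {m : Type*} [Fintype m] [DecidableEq m] (X : Matrix m m ℝ) (ω c : ℝ) (hc : c ≠ 0)
    (hinv : IsUnit ((Complex.I * ω) • (1 : Matrix m m ℂ) + X.map Complex.ofReal)) :
    (((c : ℂ) • (((ω : ℂ) ^ 2) • (1 : Matrix m m ℂ) -
        (Complex.I * ω) • (X.map Complex.ofReal - (X.map Complex.ofReal)ᵀ) +
        (X.map Complex.ofReal)ᵀ * X.map Complex.ofReal)⁻¹)⁻¹).map Complex.re
      = (1 / c) • ((ω ^ 2) • (1 : Matrix m m ℝ) + Xᵀ * X) := by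
  set X' : Matrix m m ℂ := X.map Complex.ofReal with hX'
  set A : Matrix m m ℂ := (Complex.I * ω) • (1 : Matrix m m ℂ) + X' with hA
  set M : Matrix m m ℂ := ((ω : ℂ) ^ 2) • (1 : Matrix m m ℂ) -
      (Complex.I * ω) • (X' - X'ᵀ) + X'ᵀ * X' with hM
  have hAH : Aᴴ = (-(Complex.I * ω)) • (1 : Matrix m m ℂ) + X'ᵀ := by
    rw [hA, conjTranspose_add, conjTranspose_smul, conjTranspose_one]
    congr 1
    · congr 1
      simp [Complex.ext_iff]
    · ext i j
      simp [hX', Matrix.conjTranspose_apply, Complex.conj_ofReal]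
  have h1 : (Complex.I * (ω:ℂ)) * (Complex.I * ω) = -((ω : ℂ) ^ 2) := by
    rw [show (Complex.I * (ω:ℂ)) * (Complex.I * ω)
      = (Complex.I * Complex.I) * ((ω:ℂ) * ω) by ring, Complex.I_mul_I]; ring
  have hMfact : M = Aᴴ * A := by
    rw [hAH, hA]
    simp only [add_mul, mul_add, smul_mul_assoc, mul_smul_comm, one_mul, mul_one, smul_smul,
      neg_smul, neg_mul, mul_neg, neg_neg, smul_add, smul_neg, smul_sub, h1]
    rw [hM]
    module
  have hdetA : IsUnit A.det := (isUnit_iff_isUnit_det A).mp hinv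
  have hdetM : IsUnit M.det := by
    rw [hMfact, Matrix.det_mul, Matrix.det_conjTranspose]
    exact (hdetA.star).mul hdetA
  have hinvM : ((c : ℂ) • M⁻¹)⁻¹ = (c : ℂ)⁻¹ • M := by
    apply inv_eq_right_inv
    rw [smul_mul_smul_comm, Matrix.nonsing_inv_mul M hdetM,
      mul_inv_cancel₀ (by exact_mod_cast hc), one_smul]
  rw [hinvM]
  ext i j
  have key : ∀ a b s : ℝ, (((c : ℂ))⁻¹ * ((a : ℂ) - Complex.I * ω * b + s)).re
      = c⁻¹ * (a + s) := by
    intro a b s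
    rw [← Complex.ofReal_inv]
    simp [Complex.mul_re, Complex.mul_im]
  simp only [Matrix.map_apply, Matrix.smul_apply, Matrix.add_apply, Matrix.sub_apply, hM, hX',
    Matrix.mul_apply, Matrix.one_apply, Matrix.transpose_apply, smul_eq_mul]
  have hsum : (∑ x : m, ((X x i : ℂ) * (X x j : ℂ))) = ((∑ x : m, X x i * X x j : ℝ) : ℂ) := by
    push_cast; rfl
  have hite : ((ω:ℂ)^2 * (if i = j then (1:ℂ) else 0))
      = ((ω^2 * (if i = j then (1:ℝ) else 0) : ℝ) : ℂ) := by split_ifs <;> push_cast <;> ring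
  have hdiff : ((X i j : ℂ) - (X j i : ℂ)) = ((X i j - X j i : ℝ) : ℂ) := by push_cast; ring
  rw [hsum, hite, hdiff, key]
  ring

theorem grounded_spectrum_recovery (n : ℕ)
    (L : Matrix (Fin (n + 1)) (Fin (n + 1)) ℝ)
    (hrow : L *ᵥ (fun _ => (1 : ℝ)) = 0) (j : Fin (n + 1))
    (Lt : Matrix (Fin n) (Fin n) ℝ) (hLt : Lt = L.submatrix j.succAbove j.succAbove)
    (ω : ℝ) (hω : ω ≠ 0)
    (hinv : IsUnit ((Complex.I * ω) • (1 : Matrix (Fin (n + 1)) (Fin (n + 1)) ℂ) +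
        L.map Complex.ofReal))
    (hinvt : IsUnit ((Complex.I * ω) • (1 : Matrix (Fin n) (Fin n) ℂ) + Lt.map Complex.ofReal))
    (c : ℝ) (hc : 0 < c)
    (S : Matrix (Fin (n + 1)) (Fin (n + 1)) ℂ)
    (hS : S = (c : ℂ) • (((ω : ℂ) ^ 2) • (1 : Matrix (Fin (n + 1)) (Fin (n + 1)) ℂ) -
        (Complex.I * ω) • (L.map Complex.ofReal - (L.map Complex.ofReal)ᵀ) +
        (L.map Complex.ofReal)ᵀ * L.map Complex.ofReal)⁻¹)
    (St : Matrix (Fin n) (Fin n) ℂ)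
    (hSt : St = (c : ℂ) • (((ω : ℂ) ^ 2) • (1 : Matrix (Fin n) (Fin n) ℂ) -
        (Complex.I * ω) • (Lt.map Complex.ofReal - (Lt.map Complex.ofReal)ᵀ) +
        (Lt.map Complex.ofReal)ᵀ * Lt.map Complex.ofReal)⁻¹) :
    (St⁻¹.map Complex.re = (1 / c) • ((ω ^ 2) • (1 : Matrix (Fin n) (Fin n) ℝ) + Ltᵀ * Lt)) ∧
    (∀ i : Fin (n + 1),
      Ltᵀ * Lt = (ω ^ 2) • ((1 / (((S⁻¹.map Complex.re) *ᵥ (fun _ => (1 : ℝ))) i)) •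
          (St⁻¹.map Complex.re) - (1 : Matrix (Fin n) (Fin n) ℝ))) := by
  have hc0 : c ≠ 0 := ne_of_gt hc
  have hSre : S⁻¹.map Complex.re
      = (1 / c) • ((ω ^ 2) • (1 : Matrix (Fin (n + 1)) (Fin (n + 1)) ℝ) + Lᵀ * L) := by
    rw [hS]; exact aux_re L ω c hc0 hinv
  have hStre : St⁻¹.map Complex.re
      = (1 / c) • ((ω ^ 2) • (1 : Matrix (Fin n) (Fin n) ℝ) + Ltᵀ * Lt) := by
    rw [hSt]; exact aux_re Lt ω c hc0 hinvt
  have hvec : (S⁻¹.map Complex.re) *ᵥ (fun _ => (1 : ℝ)) = fun _ => ω ^ 2 / c := by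
    rw [hSre]
    have hLtL : (Lᵀ * L) *ᵥ (fun _ => (1 : ℝ)) = 0 := by
      rw [← Matrix.mulVec_mulVec, hrow, Matrix.mulVec_zero]
    rw [Matrix.smul_mulVec, Matrix.add_mulVec, hLtL, Matrix.smul_mulVec,
      Matrix.one_mulVec]
    ext i
    simp
    ring
  refine ⟨hStre, fun i => ?_⟩
  rw [hvec, hStre]
  have hω2 : (ω : ℝ) ^ 2 ≠ 0 := pow_ne_zero 2 hω
  ext a b
  simp only [Matrix.smul_apply, Matrix.sub_apply, Matrix.add_apply, Matrix.one_apply,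
    smul_eq_mul, Matrix.mul_apply, Matrix.transpose_apply]
  split_ifs <;> field_simp <;> ring
end

section
/- Let L be an (n+1)×(n+1) real matrix whose off-diagonal entries are nonpositive and with L *ᵥ 1 = 0 (a weighted directed Laplacian), let j : Fin (n+1), and let L̃ := L.submatrix (Fin.succAbove j) (Fin.succAbove j). Then for every k : Fin n, the adjacency weight of the edge into node j from node j.succAbove k equals −L j (j.succAbove k) = Real.sqrt( (Lᵀ·L) (j.succAbove k) (j.succAbove k) − (L̃ᵀ·L̃) k k ). -/
open Matrix

theorem directed_adjacency_from_grounding (n : ℕ)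
    (L : Matrix (Fin (n + 1)) (Fin (n + 1)) ℝ)
    (hoff : ∀ p q, p ≠ q → L p q ≤ 0)
    (hrow : L *ᵥ (fun _ => (1 : ℝ)) = 0)
    (j : Fin (n + 1))
    (Lt : Matrix (Fin n) (Fin n) ℝ) (hLt : Lt = L.submatrix j.succAbove j.succAbove) :
    ∀ k : Fin n,
      -L j (j.succAbove k) =
        Real.sqrt ((Lᵀ * L) (j.succAbove k) (j.succAbove k) - (Ltᵀ * Lt) k k) := by
  intro k
  set q := j.succAbove k with hq
  have h1 : (Lᵀ * L) q q = ∑ p, L p q * L p q := by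
    simp [Matrix.mul_apply, Matrix.transpose_apply]
  have h2 : (Ltᵀ * Lt) k k = ∑ i, L (j.succAbove i) q * L (j.succAbove i) q := by
    simp [hLt, Matrix.mul_apply, Matrix.transpose_apply, Matrix.submatrix_apply, hq]
  have hsum : (∑ p, L p q * L p q) = L j q * L j q + ∑ i, L (j.succAbove i) q * L (j.succAbove i) q :=
    Fin.sum_univ_succAbove (fun p => L p q * L p q) j
  have hdiff : (Lᵀ * L) q q - (Ltᵀ * Lt) k k = L j q * L j q := by
    rw [h1, h2, hsum]; ring
  have hle : L j q ≤ 0 := hoff j q (Fin.succAbove_ne j k).symm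
  rw [hdiff, ← sq, Real.sqrt_sq_eq_abs, abs_of_nonpos hle]
end

section
/- Let G be an (n+1)×(n+1) real matrix, let j : Fin (n+1), and let G̃ := G.submatrix (Fin.succAbove j) (Fin.succAbove j). Let ω be a real number such that both iω·I − G and iω·I − G̃ (cast to ℂ entrywise) are invertible, let c > 0, and define S := c·( ω²·I − iω·(Gᵀ − G) + Gᵀ·G )⁻¹ and S̃ := c·( ω²·I − iω·(G̃ᵀ − G̃) + G̃ᵀ·G̃ )⁻¹ over ℂ. Then for every k : Fin n, |G j (j.succAbove k)| = Real.sqrt( c·( [Re(S⁻¹)] (j.succAbove k) (j.succAbove k) − [Re(S̃⁻¹)] k k ) ). -/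
/-!
Write `A = iωI - G`. The matrix `ω²I - iω(Gᵀ - G) + GᵀG` inverted in `S` is the Gram matrix
`Aᴴ A`, which is invertible together with `A`, so `S⁻¹ = c⁻¹ Aᴴ A`. The skew term `iω(Gᵀ - G)`
vanishes on the diagonal, hence `S⁻¹ i i = c⁻¹ (ω² + ∑ₗ G l i ²)` is real. Grounding node `j`
deletes row `j`, so for `i = j.succAbove k` the column sums of `G` and `G̃` differ exactly by
`G j i ²`, and `c (Re S⁻¹ i i - Re S̃⁻¹ k k) = G j i ²`.
-/

open Matrix

namespace Matrix

variable {ι : Type*} [Fintype ι] [DecidableEq ι]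

/-- For a real system matrix `G`, the output power spectral density at frequency `ω` of
`ẋ = Gx + w` driven by noise of power `c` is `c • (spectralGram G ω)⁻¹`. -/
def spectralGram (G : Matrix ι ι ℝ) (ω : ℝ) : Matrix ι ι ℂ :=
  ((ω : ℂ) ^ 2) • 1 - (Complex.I * ω) • ((G.map Complex.ofReal)ᵀ - G.map Complex.ofReal) +
    (G.map Complex.ofReal)ᵀ * G.map Complex.ofReal

theorem conjTranspose_mul_self_eq_spectralGram (G : Matrix ι ι ℝ) (ω : ℝ) :
    ((Complex.I * ω) • (1 : Matrix ι ι ℂ) - G.map Complex.ofReal)ᴴ *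
        ((Complex.I * ω) • 1 - G.map Complex.ofReal) = spectralGram G ω := by
  have hstar : star (Complex.I * ω) = -(Complex.I * ω) := by simp
  have hsq : -(Complex.I * ω) * (Complex.I * ω) = (ω : ℂ) ^ 2 := by
    linear_combination (-(ω : ℂ) ^ 2) * Complex.I_sq
  have hconj : (G.map Complex.ofReal)ᴴ = (G.map Complex.ofReal)ᵀ := by
    ext a b
    simp
  rw [conjTranspose_sub, conjTranspose_smul, conjTranspose_one, hstar, hconj, spectralGram,
    sub_mul, mul_sub, mul_sub, smul_mul_assoc, smul_mul_assoc, one_mul, mul_smul_comm, mul_one,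
    smul_smul, hsq, smul_sub, neg_smul, one_mul]
  abel

theorem isUnit_det_spectralGram {G : Matrix ι ι ℝ} {ω : ℝ}
    (h : IsUnit ((Complex.I * ω) • (1 : Matrix ι ι ℂ) - G.map Complex.ofReal)) :
    IsUnit (spectralGram G ω).det := by
  rw [← conjTranspose_mul_self_eq_spectralGram, det_mul, det_conjTranspose]
  have hdet := (isUnit_iff_isUnit_det _).mp h
  exact hdet.star.mul hdet

theorem spectralGram_apply_self (G : Matrix ι ι ℝ) (ω : ℝ) (i : ι) :
    spectralGram G ω i i = ((ω ^ 2 + ∑ l, G l i ^ 2 : ℝ) : ℂ) := by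
  simp [spectralGram, mul_apply, sq]

theorem re_smul_inv_spectralGram_inv_apply_self {G : Matrix ι ι ℝ} {ω c : ℝ} (hc : c ≠ 0)
    (h : IsUnit ((Complex.I * ω) • (1 : Matrix ι ι ℂ) - G.map Complex.ofReal)) (i : ι) :
    (((c : ℂ) • (spectralGram G ω)⁻¹)⁻¹ i i).re = c⁻¹ * (ω ^ 2 + ∑ l, G l i ^ 2) := by
  have hdet := isUnit_det_spectralGram h
  have hinv : ((c : ℂ) • (spectralGram G ω)⁻¹)⁻¹ = (c : ℂ)⁻¹ • spectralGram G ω := by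
    refine inv_eq_right_inv ?_
    rw [smul_mul_smul_comm, nonsing_inv_mul _ hdet, mul_inv_cancel₀ (mod_cast hc), one_smul]
  rw [hinv, smul_apply, spectralGram_apply_self, smul_eq_mul, ← Complex.ofReal_inv,
    ← Complex.ofReal_mul, Complex.ofReal_re]

end Matrix

theorem boolean_reconstruction_general_dynamics (n : ℕ)
    (G : Matrix (Fin (n + 1)) (Fin (n + 1)) ℝ) (j : Fin (n + 1))
    (Gt : Matrix (Fin n) (Fin n) ℝ) (hGt : Gt = G.submatrix j.succAbove j.succAbove)
    (ω : ℝ)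
    (hinv : IsUnit ((Complex.I * ω) • (1 : Matrix (Fin (n + 1)) (Fin (n + 1)) ℂ) -
        G.map Complex.ofReal))
    (hinvt : IsUnit ((Complex.I * ω) • (1 : Matrix (Fin n) (Fin n) ℂ) - Gt.map Complex.ofReal))
    (c : ℝ) (hc : 0 < c)
    (S : Matrix (Fin (n + 1)) (Fin (n + 1)) ℂ)
    (hS : S = (c : ℂ) • (((ω : ℂ) ^ 2) • (1 : Matrix (Fin (n + 1)) (Fin (n + 1)) ℂ) -
        (Complex.I * ω) • ((G.map Complex.ofReal)ᵀ - G.map Complex.ofReal) +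
        (G.map Complex.ofReal)ᵀ * G.map Complex.ofReal)⁻¹)
    (St : Matrix (Fin n) (Fin n) ℂ)
    (hSt : St = (c : ℂ) • (((ω : ℂ) ^ 2) • (1 : Matrix (Fin n) (Fin n) ℂ) -
        (Complex.I * ω) • ((Gt.map Complex.ofReal)ᵀ - Gt.map Complex.ofReal) +
        (Gt.map Complex.ofReal)ᵀ * Gt.map Complex.ofReal)⁻¹) :
    ∀ k : Fin n,
      |G j (j.succAbove k)| =
        Real.sqrt (c * ((S⁻¹ (j.succAbove k) (j.succAbove k)).re - (St⁻¹ k k).re)) := by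
  intro k
  replace hS : S = (c : ℂ) • (spectralGram G ω)⁻¹ := hS
  replace hSt : St = (c : ℂ) • (spectralGram Gt ω)⁻¹ := hSt
  subst hS hSt
  have hcol : ∑ l, G l (j.succAbove k) ^ 2 = G j (j.succAbove k) ^ 2 + ∑ l, Gt l k ^ 2 := by
    rw [Fin.sum_univ_succAbove _ j, hGt]
    rfl
  rw [re_smul_inv_spectralGram_inv_apply_self hc.ne' hinv,
    re_smul_inv_spectralGram_inv_apply_self hc.ne' hinvt, hcol, ← Real.sqrt_sq_eq_abs]
  congr 1
  field_simp
  ring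
end
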